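/- Let C be a binary linear code of length N with minimum distance d_min, and Ω the set of erasure patterns covering at least one nonzero codeword. For every boundary point ω ∈ ∂Ω, letting x(ω) denote the unique nonzero codeword covered by ω, we have h_Ω(ω) ≥ w_H(x(ω)); in particular h_Ω(ω) ≥ d_min for all ω ∈ ∂Ω. -/

import Mathlib

open scoped Classical
open Finset

noncomputable section

/-- Erasure patterns and codewords: vectors in 𝔽₂^N. -/
abbrev Pattern (N : ℕ) := Fin N → ZMod 2

/-- Hamming weight. -/
def wH {N : ℕ} (x : Pattern N) : ℕ := hammingNorm x

/-- `ω` covers `x` if the support of `x` is contained in the support of `ω`. -/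
def covers {N : ℕ} (ω x : Pattern N) : Prop := ∀ i, x i ≠ 0 → ω i ≠ 0

/-- Erasure patterns covering at least one nonzero codeword. -/
def errBEC {N : ℕ} (C : Submodule (ZMod 2) (Pattern N)) : Finset (Pattern N) :=
  univ.filter (fun ω => ∃ x ∈ C, x ≠ 0 ∧ covers ω x)

/-- The boundary ∂Ω: elements of Ω having a Hamming-distance-1 neighbour outside Ω. -/
def bdry {N : ℕ} (C : Submodule (ZMod 2) (Pattern N)) : Finset (Pattern N) :=
  (errBEC C).filter (fun ω => ∃ ω', ω' ∉ errBEC C ∧ hammingDist ω ω' = 1)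

/-- h_Ω(ω): number of Hamming-distance-1 neighbours of ω outside Ω (zero for ω ∉ Ω). -/
def hOm {N : ℕ} (C : Submodule (ZMod 2) (Pattern N)) (ω : Pattern N) : ℕ :=
  if ω ∈ errBEC C then
    (univ.filter (fun ω' : Pattern N => ω' ∉ errBEC C ∧ hammingDist ω ω' = 1)).card
  else 0

/-! Let `ω ∈ ∂Ω` and let `ω'` be a neighbour of `ω` outside `Ω`, differing from it at the
coordinate `j`. Every nonzero codeword covered by `ω` must use `j`, since otherwise `ω'` would
still cover it. Now let `x` be such a codeword and `i ∈ supp x`. If un-erasing coordinate `i`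
of `ω` left a nonzero codeword `y` covered, then `x + y` would be a nonzero codeword covered by
`ω` vanishing at `j`, as `x j = y j = 1`. So the `w_H(x)` patterns obtained by un-erasing one
coordinate of `supp x` are distinct neighbours of `ω` outside `Ω`. -/

open Function

variable {N : ℕ} {C : Submodule (ZMod 2) (Pattern N)} {ω x y : Pattern N}

lemma ZMod.add_eq_zero_of_ne_zero_two {a b : ZMod 2} (ha : a ≠ 0) (hb : b ≠ 0) : a + b = 0 := by
  revert a b; decide

lemma mem_errBEC : ω ∈ errBEC C ↔ ∃ x ∈ C, x ≠ 0 ∧ covers ω x := by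
  simp [errBEC]

lemma covers_add (hx : covers ω x) (hy : covers ω y) : covers ω (x + y) := by
  intro k hk
  by_contra hωk
  have hxk : x k = 0 := not_imp_not.mp (hx k) hωk
  have hyk : y k = 0 := not_imp_not.mp (hy k) hωk
  simp [hxk, hyk] at hk

lemma covers_of_covers_update_zero {i : Fin N} (h : covers (update ω i 0) y) :
    covers ω y ∧ y i = 0 := by
  have hyi : y i = 0 := by
    by_contra hyi
    simpa using h i hyi
  refine ⟨fun k hk => ?_, hyi⟩
  have hki : k ≠ i := by rintro rfl; exact hk hyi
  simpa [update_of_ne hki] using h k hk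

lemma hammingDist_update_zero {i : Fin N} (h : ω i ≠ 0) :
    hammingDist ω (update ω i 0) = 1 := by
  refine Finset.card_eq_one.mpr ⟨i, Finset.ext fun k => ?_⟩
  by_cases hki : k = i
  · subst hki; simpa using h
  · simp [hki]

lemma exists_forall_apply_ne_zero_of_mem_bdry (hω : ω ∈ bdry C) :
    ∃ j, ∀ x ∈ C, x ≠ 0 → covers ω x → x j ≠ 0 := by
  obtain ⟨-, ω', hω', hd⟩ := Finset.mem_filter.mp hω
  obtain ⟨j, hj⟩ := Finset.card_eq_one.mp hd
  have agree : ∀ i ≠ j, ω i = ω' i := fun i hij => by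
    by_contra hne
    exact hij (Finset.mem_singleton.mp (hj ▸ Finset.mem_filter.mpr ⟨Finset.mem_univ i, hne⟩))
  refine ⟨j, fun x hxC hx0 hxc hxj => hω' (mem_errBEC.mpr ⟨x, hxC, hx0, fun i hxi => ?_⟩)⟩
  have hij : i ≠ j := by rintro rfl; exact hxi hxj
  exact agree i hij ▸ hxc i hxi

lemma update_zero_notMem_errBEC {j i : Fin N}
    (hj : ∀ x ∈ C, x ≠ 0 → covers ω x → x j ≠ 0)
    (hxC : x ∈ C) (hx0 : x ≠ 0) (hxc : covers ω x) (hxi : x i ≠ 0) :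
    update ω i 0 ∉ errBEC C := by
  intro hmem
  obtain ⟨y, hyC, hy0, hyc⟩ := mem_errBEC.mp hmem
  obtain ⟨hycω, hyi⟩ := covers_of_covers_update_zero hyc
  have hsum0 : x + y ≠ 0 := fun h => hxi (by simpa [hyi] using congrFun h i)
  refine hj _ (C.add_mem hxC hyC) hsum0 (covers_add hxc hycω) ?_
  exact ZMod.add_eq_zero_of_ne_zero_two (hj x hxC hx0 hxc) (hj y hyC hy0 hycω)

lemma wH_le_hOm_of_mem_bdry (hω : ω ∈ bdry C) (hxC : x ∈ C) (hx0 : x ≠ 0)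
    (hxc : covers ω x) : wH x ≤ hOm C ω := by
  obtain ⟨j, hj⟩ := exists_forall_apply_ne_zero_of_mem_bdry hω
  rw [hOm, if_pos (Finset.mem_filter.mp hω).1, wH, hammingNorm]
  refine Finset.card_le_card_of_injOn (fun i => update ω i 0) (fun i hi => ?_) ?_
  · have hxi : x i ≠ 0 := (Finset.mem_filter.mp hi).2
    exact Finset.mem_filter.mpr ⟨Finset.mem_univ _,
      update_zero_notMem_errBEC hj hxC hx0 hxc hxi, hammingDist_update_zero (hxc i hxi)⟩
  · intro i hi i' _ h
    by_contra hne
    have := congrFun h i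
    simp only [update_self, update_of_ne hne] at this
    exact hxc i (Finset.mem_filter.mp hi).2 this.symm

theorem boundary_hOm_lower_bound (N dmin : ℕ) (C : Submodule (ZMod 2) (Pattern N))
    (hdmin : IsLeast {w : ℕ | ∃ x ∈ C, x ≠ 0 ∧ wH x = w} dmin) :
    ∀ ω ∈ bdry C,
      (∀ x : Pattern N, x ∈ C → x ≠ 0 → covers ω x → wH x ≤ hOm C ω) ∧
      dmin ≤ hOm C ω := by
  intro ω hω
  have hweight : ∀ x : Pattern N, x ∈ C → x ≠ 0 → covers ω x → wH x ≤ hOm C ω :=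
    fun x hxC hx0 hxc => wH_le_hOm_of_mem_bdry hω hxC hx0 hxc
  obtain ⟨x, hxC, hx0, hxc⟩ := mem_errBEC.mp (Finset.mem_filter.mp hω).1
  exact ⟨hweight, (hdmin.2 ⟨x, hxC, hx0, rfl⟩).trans (hweight x hxC hx0 hxc)⟩

end
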